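/- arXiv:1109.6220 — 4 statements merged into one kernel-verified Lean document; each statement's English description precedes it below -/
import Mathlib

section
/- The initialised concurrent game (G_1, s_1) has no Nash equilibrium. -/
open MeasureTheory Filter

noncomputable section

instance : Fact ((0:ℝ) < 1) := ⟨one_pos⟩

/-- The source of randomness used to run strategies: a countable product of circle groups,
which is a compact group, equipped below with its normalised Haar measure.  Under this
measure the coordinates (read as reals in `[0,1)`) are i.i.d. uniform random variables. -/
abbrev USpace : Type := ℕ → AddCircle (1:ℝ)

/-- The normalised Haar (probability) measure on `USpace`. -/
def uHaar : Measure USpace :=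
  ((Measure.addHaar (G := USpace)) Set.univ)⁻¹ • Measure.addHaar

/-- The `n`-th uniform coordinate, as a real number in `[0,1)`. -/
def coordReal (u : USpace) (n : ℕ) : ℝ := ((AddCircle.equivIco 1 0) (u n) : ℝ)

/-- A concurrent game with players `P`, states `S` and actions `A` (all finite and nonempty):
each player `i` has a nonempty set `act i s` of actions available at each state `s`, there is a
transition function `tr` and a reward function `rew i` for each player. -/
structure ConcurrentGame (P S A : Type) [Fintype P] [Nonempty P] [Fintype S] [Nonempty S]
    [Fintype A] [Nonempty A] : Type where
  act : P → S → Set A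
  act_nonempty : ∀ i s, (act i s).Nonempty
  tr : S → (P → A) → S
  rew : P → S → ℝ

/-- A history (without its final state): the list of (state, action profile) pairs seen so far,
in chronological order. -/
abbrev Hist (P S A : Type) := List (S × (P → A))

variable {P S A : Type} [Fintype P] [Nonempty P] [Fintype S] [Nonempty S]
  [Fintype A] [Nonempty A] [DecidableEq P]

namespace ConcurrentGame

/-- A (randomised) strategy of player `i`: for every history `x` and current state `s`,
a probability distribution on actions, supported on the available actions `act i s`. -/
structure Strategy (G : ConcurrentGame P S A) (i : P) where
  prob : Hist P S A → S → A → ℝ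
  nonneg : ∀ x s a, 0 ≤ prob x s a
  sum_one : ∀ x s, ∑ a, prob x s a = 1
  supp : ∀ x s a, prob x s a ≠ 0 → a ∈ G.act i s

variable {G : ConcurrentGame P S A}

/-- A pure strategy: every prescribed distribution is degenerate. -/
def Strategy.IsPure {i : P} (σ : Strategy G i) : Prop := ∀ x s, ∃ a, σ.prob x s a = 1

/-- A stationary strategy: depends only on the current state. -/
def Strategy.IsStationary {i : P} (σ : Strategy G i) : Prop :=
  ∀ x y s, σ.prob x s = σ.prob y s

/-- A positional strategy: pure and stationary. -/
def Strategy.IsPositional {i : P} (σ : Strategy G i) : Prop :=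
  σ.IsPure ∧ σ.IsStationary

end ConcurrentGame

/-- A strategy profile: one strategy for each player. -/
abbrev Profile (G : ConcurrentGame P S A) := ∀ i : P, G.Strategy i

namespace ConcurrentGame

def IsPureProfile {G : ConcurrentGame P S A} (σ : Profile G) : Prop := ∀ i, (σ i).IsPure
def IsStationaryProfile {G : ConcurrentGame P S A} (σ : Profile G) : Prop :=
  ∀ i, (σ i).IsStationary
def IsPositionalProfile {G : ConcurrentGame P S A} (σ : Profile G) : Prop :=
  ∀ i, (σ i).IsPositional

variable (G : ConcurrentGame P S A)

/-- An action profile is legal at `s` if each player's action is available to her. -/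
def Legal (s : S) (a : P → A) : Prop := ∀ i, a i ∈ G.act i s

/-- A play of the game: an infinite sequence of (state, action profile) pairs such that every
action profile is legal and consecutive states are related by the transition function. -/
def IsPlay (π : ℕ → S × (P → A)) : Prop :=
  ∀ n, G.Legal (π n).1 (π n).2 ∧ (π (n + 1)).1 = G.tr (π n).1 (π n).2

/-- The limit-average (mean) payoff of player `i` along a sequence of states. -/
def payOf (i : P) (ss : ℕ → S) : ℝ :=
  Filter.liminf (fun n : ℕ => (∑ j ∈ Finset.range n, G.rew i (ss j)) / n) Filter.atTop

/-- The probability that profile `a` is played after history `(x, s)` under profile `σ`. -/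
def weight (σ : Profile G) (x : Hist P S A) (s : S) (a : P → A) : ℝ :=
  ∏ i, (σ i).prob x s (a i)

/-- cumulative distribution of `f` w.r.t. a fixed enumeration of action profiles. -/
def cum (f : (P → A) → ℝ) (k : ℕ) : ℝ :=
  ∑ b ∈ Finset.univ.filter (fun b => ((Fintype.equivFin (P → A)) b : ℕ) < k), f b

/-- Sample an action profile from the distribution `f` via inverse-cdf transform of `u ∈ [0,1)`. -/
def pick (f : (P → A) → ℝ) (u : ℝ) : P → A :=
  (Fintype.equivFin (P → A)).symm
    (if h : (Finset.univ.filter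
          (fun k : Fin (Fintype.card (P → A)) => cum (P := P) (A := A) f ((k : ℕ) + 1) ≤ u)).card
        < Fintype.card (P → A)
      then ⟨_, h⟩ else ⟨0, Fintype.card_pos⟩)

/-- The history induced from initial state `s₀` by a finite sequence of action profiles. -/
def histOf (s₀ : S) : List (P → A) → Hist P S A × S
  | [] => ([], s₀)
  | a :: l =>
    let h : Hist P S A × S := histOf (G.tr s₀ a) l
    ((s₀, a) :: h.1, h.2)

/-- The first `n` action profiles of the play run by profile `σ` from `s₀`,
driven by the source of randomness `u`. -/
def samplePrefix (σ : Profile G) (s₀ : S) (u : USpace) : ℕ → List (P → A)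
  | 0 => []
  | n + 1 =>
    let l : List (P → A) := samplePrefix σ s₀ u n
    let h : Hist P S A × S := G.histOf s₀ l
    l ++ [pick (G.weight σ h.1 h.2) (coordReal u n)]

/-- The state at time `n` of the play run by `σ` from `s₀` with randomness `u`. -/
def stateAt (σ : Profile G) (s₀ : S) (u : USpace) (n : ℕ) : S :=
  (G.histOf s₀ (G.samplePrefix σ s₀ u n)).2

/-- The expected (limit-average) payoff of player `i` under the strategy profile `σ`,
starting from `s₀`: the integral of the mean payoff over the induced measure on plays. -/
def expPay (σ : Profile G) (s₀ : S) (i : P) : ℝ :=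
  ∫ u, G.payOf i (G.stateAt σ s₀ u) ∂uHaar

/-- The probability that the play under `σ` from `s₀` ever visits the set `T` of states. -/
def probVisit (σ : Profile G) (s₀ : S) (T : Set S) : ℝ :=
  (uHaar {u | ∃ n, G.stateAt σ s₀ u n ∈ T}).toReal

/-- A Nash equilibrium: no player can increase her expected payoff by unilaterally
switching to another strategy. -/
def IsNash (σ : Profile G) (s₀ : S) : Prop :=
  ∀ (i : P) (τ : G.Strategy i),
    G.expPay (Function.update σ i τ) s₀ i ≤ G.expPay σ s₀ i

/-- `pval i s`: the least payoff the coalition of all other players can inflict on player `i`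
using pure strategy profiles, when the game starts at `s`. -/
def pval (i : P) (s : S) : ℝ :=
  ⨅ σ : {σ : Profile G // IsPureProfile σ}, ⨆ τ : G.Strategy i,
    G.expPay (Function.update σ.1 i τ) s i

/-- A state is terminal if every legal action profile leads back to it. -/
def Terminal (s : S) : Prop := ∀ a, G.Legal s a → G.tr s a = s

/-- A terminal-reward game: non-zero rewards occur only at terminal states. -/
def IsTerminalReward : Prop := ∀ (i : P) (s : S), ¬ G.Terminal s → G.rew i s = 0

/-- `a` is `z`-secure at `s`: `a` is legal at `s`, and whenever a single player `i` deviates to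
some available action `b`, the resulting state has `pval i ≤ z i`. -/
def zSecure (z : P → EReal) (s : S) (a : P → A) : Prop :=
  G.Legal s a ∧
    ∀ (i : P), ∀ b ∈ G.act i s, (G.pval i (G.tr s (Function.update a i b)) : EReal) ≤ z i

/-- The edge relation of the graph `G(z)`: an edge from `s` to `t` iff some `z`-secure action
profile at `s` leads to `t`. -/
def secureEdge (z : P → EReal) (s t : S) : Prop :=
  ∃ a, G.zSecure z s a ∧ G.tr s a = t

end ConcurrentGame

end

noncomputable section

/-- The states of the game `G₁`: the non-terminal state `s1` and two terminal states `l`, `r`. -/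
inductive G1State : Type
  | s1 | l | r
  deriving DecidableEq

instance : Fintype G1State :=
  ⟨{G1State.s1, G1State.l, G1State.r}, fun x => by cases x <;> simp⟩

instance : Nonempty G1State := ⟨G1State.s1⟩

/-- The game `G₁` of Example 1: two players (player 1 = `0`, player 2 = `1`), both with actions
`a` (= `false`) and `b` (= `true`) at every state.  At `s1`, the profile `(a,a)` loops to `s1`,
`(b,b)` leads to `l` and `(a,b)`, `(b,a)` lead to `r`; `l` and `r` are terminal.  At `r` player 1
gets reward `1` and player 2 gets `-1`; at `l` player 1 gets `-1` and player 2 gets `1`; all other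
rewards are `0`. -/
def gameG1 : ConcurrentGame (Fin 2) G1State Bool where
  act _ _ := Set.univ
  act_nonempty _ _ := ⟨false, trivial⟩
  tr s a :=
    match s with
    | .s1 =>
      if a 0 = false ∧ a 1 = false then .s1
      else if a 0 = true ∧ a 1 = true then .l
      else .r
    | .l => .l
    | .r => .r
  rew i s :=
    match s with
    | .s1 => 0
    | .l => if i = 0 then -1 else 1
    | .r => if i = 0 then 1 else -1

/-!
Suppose `σ` is a Nash equilibrium. Player 1 may deviate to "play `a` before round `t` and `b` in
round `t`": the play then ends in `r`, except when player 2 plays `a` before round `t` and `b` in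
round `t`. These exceptional events have probabilities `q t` summing to at most one, so `q t`
becomes arbitrarily small and player 1 secures payoff arbitrarily close to `1`. The game is
zero-sum, so player 2 gets at most `-1` under `σ`. The symmetric deviations of player 2 then force
player 1 never to play `b` after a run of `(a, a)`, and against that player 2 gets `0` by always
playing `a`, a contradiction.

Plays are sampled from i.i.d. uniform coordinates by the inverse-cdf transform, so the probability
that a play starts with given action profiles is the product of their prescribed probabilities.
-/

lemma Finset.mem_iff_lt_card_of_isLowerSet {n : ℕ} {D : Finset (Fin n)}
    (hD : IsLowerSet (D : Set (Fin n))) (k : Fin n) : k ∈ D ↔ (k : ℕ) < D.card := by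
  constructor
  · intro hk
    have := Finset.card_le_card fun j hj => hD (Finset.mem_Iic.mp hj) hk
    rw [Fin.card_Iic] at this
    omega
  · intro hk
    by_contra hkD
    have := Finset.card_le_card fun j hj =>
      Finset.mem_Iio.mpr (lt_of_not_ge fun hjk => hkD (hD hjk hj))
    rw [Fin.card_Iio] at this
    omega

section UniformCoordinates

abbrev circleCoord (c : AddCircle (1 : ℝ)) : ℝ := AddCircle.equivIco 1 0 c

lemma circleCoord_mem_Ico (c : AddCircle (1 : ℝ)) : circleCoord c ∈ Set.Ico (0 : ℝ) 1 := by
  simpa using (AddCircle.equivIco 1 0 c).2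

lemma measurable_circleCoord : Measurable circleCoord :=
  measurable_subtype_coe.comp (AddCircle.measurableEquivIco 1 0).measurable

lemma volume_circleCoord_preimage {B : Set ℝ} (hB : MeasurableSet B) (hB01 : B ⊆ Set.Ico 0 1) :
    volume (circleCoord ⁻¹' B) = volume B := by
  -- `Ioc 0 1` is a fundamental domain; it agrees a.e. with `Ico 0 1`, where `circleCoord` inverts
  -- the projection `ℝ → AddCircle 1`.
  have hIco : ∀ {x : ℝ}, x ∈ Set.Ico (0 : ℝ) 1 → circleCoord x = x := fun hx => by
    rw [circleCoord, AddCircle.equivIco_coe_eq (a := (0 : ℝ)) (p := 1) (by simpa using hx)]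
  rw [AddCircle.add_projection_respects_measure 1 0 (measurable_circleCoord hB), zero_add,
    measure_congr ((ae_eq_refl _).inter (Ico_ae_eq_Ioc (a := (0 : ℝ)) (b := 1)).symm)]
  congr 1
  ext x
  simp only [Set.mem_inter_iff, Set.mem_preimage]
  exact ⟨fun ⟨h, hx⟩ => hIco hx ▸ h, fun hx => ⟨(hIco (hB01 hx)).symm ▸ hx, hB01 hx⟩⟩

instance : IsProbabilityMeasure (volume : Measure (AddCircle (1 : ℝ))) :=
  ⟨by rw [AddCircle.measure_univ, ENNReal.ofReal_one]⟩

lemma addHaar_univ_pos : 0 < (Measure.addHaar (G := USpace)) Set.univ :=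
  isOpen_univ.measure_pos _ Set.univ_nonempty

lemma addHaar_univ_lt_top : (Measure.addHaar (G := USpace)) Set.univ < ⊤ :=
  isCompact_univ.measure_lt_top

instance : IsProbabilityMeasure uHaar :=
  ⟨by rw [uHaar, Measure.smul_apply, smul_eq_mul,
    ENNReal.inv_mul_cancel addHaar_univ_pos.ne' addHaar_univ_lt_top.ne]⟩

instance : Measure.IsAddHaarMeasure uHaar :=
  Measure.IsAddHaarMeasure.smul _ (by simp [addHaar_univ_lt_top.ne]) (by simp [addHaar_univ_pos.ne'])

/-- The projection to finitely many coordinates is a Haar probability measure on a product of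
circles, hence the product of the circle measures. -/
lemma uHaar_forall_lt_mem (n : ℕ) {B : ℕ → Set (AddCircle (1 : ℝ))}
    (hB : ∀ j, MeasurableSet (B j)) :
    uHaar {u | ∀ j < n, u j ∈ B j} = ∏ j ∈ Finset.range n, volume (B j) := by
  let proj : USpace →+ (Fin n → AddCircle (1 : ℝ)) :=
    { toFun := fun u j => u j
      map_zero' := rfl
      map_add' := fun _ _ => rfl }
  have hproj : Continuous proj := continuous_pi fun j => continuous_apply (j : ℕ)
  have hsurj : Function.Surjective proj := fun v =>
    ⟨fun m => if h : m < n then v ⟨m, h⟩ else 0, funext fun j => by simp [proj, j.isLt]⟩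
  have := Measure.isAddHaarMeasure_map_of_isFiniteMeasure uHaar proj hproj hsurj
  have := Measure.isProbabilityMeasure_map (μ := uHaar) hproj.measurable.aemeasurable
  have hmap : Measure.map proj uHaar = Measure.pi fun _ => volume :=
    Measure.isAddHaarMeasure_eq_of_isProbabilityMeasure _ _
  have hset : {u : USpace | ∀ j < n, u j ∈ B j} = proj ⁻¹' Set.univ.pi fun j => B j := by
    ext u
    simp [proj, Fin.forall_iff]
  rw [hset, ← Measure.map_apply hproj.measurable (MeasurableSet.univ_pi fun j => hB j), hmap,
    Measure.pi_pi, Fin.prod_univ_eq_prod_range (fun j => volume (B j))]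

end UniformCoordinates

namespace ConcurrentGame

section InverseCdf

variable {P A : Type} [Fintype P] [Fintype A] [DecidableEq P] {f : (P → A) → ℝ}

abbrev profileIndex (b : P → A) : ℕ := Fintype.equivFin (P → A) b

lemma cum_mono (hf : ∀ b, 0 ≤ f b) : Monotone (cum f) := fun _ _ hkk' =>
  Finset.sum_le_sum_of_subset_of_nonneg
    (Finset.monotone_filter_right _ fun _ _ hb => lt_of_lt_of_le hb hkk') fun b _ _ => hf b

lemma cum_nonneg (hf : ∀ b, 0 ≤ f b) (k : ℕ) : 0 ≤ cum f k :=
  Finset.sum_nonneg fun b _ => hf b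

lemma cum_le_sum (hf : ∀ b, 0 ≤ f b) (k : ℕ) : cum f k ≤ ∑ b, f b :=
  Finset.sum_le_sum_of_subset_of_nonneg (Finset.filter_subset _ _) fun b _ _ => hf b

lemma cum_of_card_le {k : ℕ} (h : Fintype.card (P → A) ≤ k) : cum f k = ∑ b, f b := by
  rw [cum, Finset.filter_true_of_mem fun b _ => lt_of_lt_of_le (Fin.is_lt _) h]

lemma cum_profileIndex_succ (b : P → A) :
    cum f (profileIndex b + 1) = cum f (profileIndex b) + f b := by
  classical
  have hset : Finset.univ.filter (fun b' : P → A => profileIndex b' < profileIndex b + 1) =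
      insert b (Finset.univ.filter fun b' : P → A => profileIndex b' < profileIndex b) := by
    ext b'
    simp only [Finset.mem_filter, Finset.mem_univ, true_and, Finset.mem_insert, Nat.lt_succ_iff,
      le_iff_lt_or_eq, Fin.val_inj, (Fintype.equivFin (P → A)).injective.eq_iff]
    tauto
  rw [cum, hset, Finset.sum_insert (by simp), add_comm]
  rfl

variable [Nonempty A] (hf : ∀ b, 0 ≤ f b) (hsum : ∑ b, f b = 1) {u : ℝ}
include hf hsum

lemma mem_Ico_cum_pick (hu : u ∈ Set.Ico (0 : ℝ) 1) :
    u ∈ Set.Ico (cum f (profileIndex (pick f u))) (cum f (profileIndex (pick f u) + 1)) := by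
  -- The indices `k` with `cum f (k + 1) ≤ u` form an initial segment; `pick` returns its length.
  set N := Fintype.card (P → A)
  set D := Finset.univ.filter fun k : Fin N => cum f ((k : ℕ) + 1) ≤ u
  have hmem : ∀ k : Fin N, k ∈ D ↔ (k : ℕ) < D.card := by
    refine Finset.mem_iff_lt_card_of_isLowerSet ?_
    intro k k' hle hk
    simp only [D, Finset.mem_coe, Finset.mem_filter, Finset.mem_univ, true_and] at hk ⊢
    exact (cum_mono hf (Nat.add_le_add_right hle 1)).trans hk
  have hNpos : 0 < N := Fintype.card_pos
  have hcard : D.card < N := by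
    by_contra! hge
    have hlast := (hmem ⟨N - 1, by omega⟩).mpr (by simp only; omega)
    simp only [D, Finset.mem_filter, Finset.mem_univ, true_and, Nat.sub_add_cancel hNpos] at hlast
    rw [cum_of_card_le le_rfl, hsum] at hlast
    linarith [hu.2]
  have hidx : profileIndex (pick f u) = D.card := by
    simp only [profileIndex, pick, Equiv.apply_symm_apply]
    rw [dif_pos hcard]
  rw [hidx]
  constructor
  · rcases Nat.eq_zero_or_pos D.card with h0 | hpos
    · simpa [h0, cum] using hu.1
    · have hm := (hmem ⟨D.card - 1, by omega⟩).mpr (by simp only; omega)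
      simpa only [D, Finset.mem_filter, Finset.mem_univ, true_and, Nat.sub_add_cancel hpos]
        using hm
  · have hm : (⟨D.card, hcard⟩ : Fin N) ∉ D := fun h => by simpa using (hmem _).mp h
    simpa [D] using hm

lemma pick_eq_iff (hu : u ∈ Set.Ico (0 : ℝ) 1) (b : P → A) :
    pick f u = b ↔ u ∈ Set.Ico (cum f (profileIndex b)) (cum f (profileIndex b + 1)) := by
  refine ⟨fun h => h ▸ mem_Ico_cum_pick hf hsum hu, fun ⟨h1, h2⟩ => ?_⟩
  obtain ⟨h1', h2'⟩ := mem_Ico_cum_pick hf hsum hu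
  have hidx : profileIndex (pick f u) = profileIndex b := by
    by_contra hne
    rcases Nat.lt_or_gt_of_ne hne with h | h <;> linarith [cum_mono hf (Nat.succ_le_of_lt h)]
  exact (Fintype.equivFin (P → A)).injective (Fin.ext hidx)

lemma pick_pos (hu : u ∈ Set.Ico (0 : ℝ) 1) : 0 < f (pick f u) := by
  obtain ⟨h1, h2⟩ := mem_Ico_cum_pick hf hsum hu
  linarith [cum_profileIndex_succ (f := f) (pick f u)]

end InverseCdf

section PickCell

variable {P A : Type} [Fintype P] [Fintype A] [Nonempty A] [DecidableEq P]
  {w : (P → A) → ℝ} (hw : ∀ b, 0 ≤ w b) (hsum : ∑ b, w b = 1) (b : P → A)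
include hw hsum

lemma pick_circleCoord_preimage :
    {c | pick w (circleCoord c) = b} =
      circleCoord ⁻¹' Set.Ico (cum w (profileIndex b)) (cum w (profileIndex b + 1)) :=
  Set.ext fun c => pick_eq_iff hw hsum (circleCoord_mem_Ico c) b

lemma measurableSet_pick_circleCoord_eq : MeasurableSet {c | pick w (circleCoord c) = b} := by
  rw [pick_circleCoord_preimage hw hsum]
  exact measurable_circleCoord measurableSet_Ico

lemma volume_pick_circleCoord_eq : volume {c | pick w (circleCoord c) = b} = ENNReal.ofReal (w b) := by
  have hsub : Set.Ico (cum w (profileIndex b)) (cum w (profileIndex b + 1)) ⊆ Set.Ico 0 1 :=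
    fun x hx => ⟨(cum_nonneg hw _).trans hx.1, hx.2.trans_le (hsum ▸ cum_le_sum hw _)⟩
  rw [pick_circleCoord_preimage hw hsum, volume_circleCoord_preimage measurableSet_Ico hsub,
    Real.volume_Ico, cum_profileIndex_succ, add_sub_cancel_left]

end PickCell

variable {P S A : Type} [Fintype P] [Nonempty P] [Fintype S] [Nonempty S]
  [Fintype A] [Nonempty A] {G : ConcurrentGame P S A}

lemma payOf_of_eventually_eq {ss : ℕ → S} {s : S} (h : ∀ᶠ n in atTop, ss n = s) (i : P) :
    G.payOf i ss = G.rew i s := by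
  have hrew : Tendsto (fun n => G.rew i (ss n)) atTop (nhds (G.rew i s)) :=
    tendsto_const_nhds.congr' (h.mono fun n hn => by simp only [hn])
  refine Tendsto.liminf_eq ?_
  simpa only [div_eq_inv_mul] using hrew.cesaro

lemma Strategy.prob_false {G : ConcurrentGame P S Bool} {i : P} (τ : G.Strategy i)
    (x : Hist P S Bool) (s : S) : τ.prob x s false = 1 - τ.prob x s true := by
  linarith [Fintype.sum_bool (τ.prob x s) ▸ τ.sum_one x s]

section SampledPlay

variable (σ : Profile G) (s₀ : S)

lemma weight_nonneg (x : Hist P S A) (s : S) (b : P → A) : 0 ≤ G.weight σ x s b :=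
  Finset.prod_nonneg fun i _ => (σ i).nonneg _ _ _

def weightAfter (L : List (P → A)) : (P → A) → ℝ :=
  G.weight σ (G.histOf s₀ L).1 (G.histOf s₀ L).2

lemma weightAfter_nonneg (L : List (P → A)) (b : P → A) : 0 ≤ G.weightAfter σ s₀ L b :=
  weight_nonneg σ _ _ b

variable {σ s₀} in
lemma histOf_append (L : List (P → A)) (b : P → A) :
    G.histOf s₀ (L ++ [b]) =
      ((G.histOf s₀ L).1 ++ [((G.histOf s₀ L).2, b)], G.tr (G.histOf s₀ L).2 b) := by
  induction L generalizing s₀ with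
  | nil => rfl
  | cons a L ih => simp [histOf, ih]

variable {σ s₀} in
lemma length_histOf (L : List (P → A)) : (G.histOf s₀ L).1.length = L.length := by
  induction L generalizing s₀ with
  | nil => rfl
  | cons a L ih => simp [histOf, ih]

variable [DecidableEq P]

lemma sum_weight (x : Hist P S A) (s : S) : ∑ b, G.weight σ x s b = 1 := by
  unfold weight
  rw [← Fintype.prod_sum fun (i : P) (a : A) => (σ i).prob x s a]
  exact Finset.prod_eq_one fun i _ => (σ i).sum_one x s

lemma sum_weightAfter (L : List (P → A)) : ∑ b, G.weightAfter σ s₀ L b = 1 :=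
  sum_weight σ _ _

def sampledProfile (u : USpace) (n : ℕ) : P → A :=
  pick (G.weightAfter σ s₀ (G.samplePrefix σ s₀ u n)) (coordReal u n)

variable {σ s₀} (u : USpace) (n : ℕ)

lemma samplePrefix_succ :
    G.samplePrefix σ s₀ u (n + 1) = G.samplePrefix σ s₀ u n ++ [G.sampledProfile σ s₀ u n] :=
  rfl

lemma length_samplePrefix : (G.samplePrefix σ s₀ u n).length = n := by
  induction n with
  | zero => rfl
  | succ n ih => simp [samplePrefix_succ, ih]

lemma stateAt_succ :
    G.stateAt σ s₀ u (n + 1) = G.tr (G.stateAt σ s₀ u n) (G.sampledProfile σ s₀ u n) := by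
  rw [stateAt, samplePrefix_succ, histOf_append]
  rfl

lemma prob_sampledProfile_ne_zero (i : P) :
    (σ i).prob (G.histOf s₀ (G.samplePrefix σ s₀ u n)).1 (G.stateAt σ s₀ u n)
      (G.sampledProfile σ s₀ u n i) ≠ 0 :=
  Finset.prod_ne_zero_iff.mp
    (pick_pos (weightAfter_nonneg σ s₀ _) (sum_weightAfter σ s₀ _) (circleCoord_mem_Ico (u n))).ne' i
    (Finset.mem_univ i)

lemma legal_sampledProfile : G.Legal (G.stateAt σ s₀ u n) (G.sampledProfile σ s₀ u n) :=
  fun i => (σ i).supp _ _ _ (prob_sampledProfile_ne_zero u n i)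

lemma stateAt_eq_of_terminal {s : S} (hs : G.Terminal s) (h : G.stateAt σ s₀ u n = s) {m : ℕ}
    (hnm : n ≤ m) : G.stateAt σ s₀ u m = s := by
  induction m, hnm using Nat.le_induction with
  | base => exact h
  | succ m _ ih => rw [stateAt_succ, ih]; exact hs _ (ih ▸ legal_sampledProfile u m)

end SampledPlay

section Events

variable [DecidableEq P] {σ : Profile G} {s₀ : S}

lemma samplePrefix_succ_eq_append_iff (u : USpace) (n : ℕ) (L : List (P → A)) (b : P → A) :
    G.samplePrefix σ s₀ u (n + 1) = L ++ [b] ↔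
      G.samplePrefix σ s₀ u n = L ∧ pick (G.weightAfter σ s₀ L) (circleCoord (u n)) = b := by
  rw [samplePrefix_succ, List.append_singleton_inj]
  exact and_congr_right fun h => by rw [sampledProfile, h]; rfl

lemma samplePrefix_eq_map_range_iff (b : ℕ → P → A) (u : USpace) (n : ℕ) :
    G.samplePrefix σ s₀ u n = (List.range n).map b ↔
      ∀ j < n, u j ∈ {c | pick (G.weightAfter σ s₀ ((List.range j).map b)) (circleCoord c) = b j} := by
  induction n with
  | zero => simp [samplePrefix]
  | succ n ih =>
    rw [List.range_succ, List.map_append, List.map_singleton, samplePrefix_succ_eq_append_iff,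
      ih, Nat.forall_lt_succ_right]
    rfl

lemma uHaar_samplePrefix_eq_map_range (b : ℕ → P → A) (n : ℕ) :
    uHaar {u | G.samplePrefix σ s₀ u n = (List.range n).map b} =
      ENNReal.ofReal (∏ j ∈ Finset.range n, G.weightAfter σ s₀ ((List.range j).map b) (b j)) := by
  simp_rw [samplePrefix_eq_map_range_iff]
  rw [uHaar_forall_lt_mem n fun j =>
      measurableSet_pick_circleCoord_eq (weightAfter_nonneg σ s₀ _) (sum_weightAfter σ s₀ _) (b j),
    ENNReal.ofReal_prod_of_nonneg fun j _ => weightAfter_nonneg σ s₀ _ _]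
  exact Finset.prod_congr rfl fun j _ =>
    volume_pick_circleCoord_eq (weightAfter_nonneg σ s₀ _) (sum_weightAfter σ s₀ _) (b j)

lemma measurableSet_samplePrefix_eq (n : ℕ) (L : List (P → A)) :
    MeasurableSet {u | G.samplePrefix σ s₀ u n = L} := by
  induction n generalizing L with
  | zero => exact MeasurableSet.const ([] = L)
  | succ n ih =>
    rcases L.eq_nil_or_concat' with rfl | ⟨L, b, rfl⟩
    · simp [samplePrefix_succ]
    · simp_rw [samplePrefix_succ_eq_append_iff, Set.ofPred_and]
      exact (ih L).inter <| (measurableSet_pick_circleCoord_eq (weightAfter_nonneg σ s₀ L)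
        (sum_weightAfter σ s₀ L) b).preimage (measurable_pi_apply n)

lemma measurableSet_stateAt_eq (n : ℕ) (s : S) : MeasurableSet {u | G.stateAt σ s₀ u n = s} := by
  have : {u | G.stateAt σ s₀ u n = s} =
      ⋃ L : List (P → A), {u | G.samplePrefix σ s₀ u n = L ∧ (G.histOf s₀ L).2 = s} := by
    ext u
    simp [stateAt]
  rw [this]
  exact MeasurableSet.iUnion fun L =>
    (measurableSet_samplePrefix_eq n L).inter (MeasurableSet.const _)

variable (σ s₀) in
def visitEvent (s : S) : Set USpace := {u | ∃ n, G.stateAt σ s₀ u n = s}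

lemma measurableSet_visitEvent (s : S) : MeasurableSet (G.visitEvent σ s₀ s) := by
  simp_rw [visitEvent, Set.ofPred_exists]
  exact MeasurableSet.iUnion fun n => measurableSet_stateAt_eq n s

end Events

end ConcurrentGame

section FirstSuccess

/-- The probability that the first success of independent trials with success probabilities
`p 0, p 1, …` happens at trial `t`. -/
def firstSuccess (p : ℕ → ℝ) (t : ℕ) : ℝ := (∏ j ∈ Finset.range t, (1 - p j)) * p t

variable {p : ℕ → ℝ}

lemma sum_range_firstSuccess (n : ℕ) :
    ∑ t ∈ Finset.range n, firstSuccess p t = 1 - ∏ j ∈ Finset.range n, (1 - p j) := by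
  induction n with
  | zero => simp
  | succ n ih => rw [Finset.sum_range_succ, ih, Finset.prod_range_succ, firstSuccess]; ring

lemma firstSuccess_nonneg (hp : ∀ j, p j ∈ Set.Icc (0 : ℝ) 1) (t : ℕ) : 0 ≤ firstSuccess p t :=
  mul_nonneg (Finset.prod_nonneg fun j _ => sub_nonneg.2 (hp j).2) (hp t).1

/-- The first-success probabilities sum to at most one, so they cannot stay above any `c > 0`. -/
lemma exists_firstSuccess_lt (hp : ∀ j, p j ≤ 1) {c : ℝ} (hc : 0 < c) :
    ∃ t, firstSuccess p t < c := by
  by_contra! h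
  obtain ⟨n, hn⟩ := exists_nat_gt (1 / c)
  have hsum : n * c ≤ ∑ t ∈ Finset.range n, firstSuccess p t := by
    simpa using Finset.card_nsmul_le_sum (Finset.range n) _ c fun t _ => h t
  have hprod : 0 ≤ ∏ j ∈ Finset.range n, (1 - p j) :=
    Finset.prod_nonneg fun j _ => sub_nonneg.2 (hp j)
  rw [sum_range_firstSuccess] at hsum
  rw [div_lt_iff₀ hc] at hn
  linarith

lemma eq_zero_of_firstSuccess_nonpos (hp : ∀ j, 0 ≤ p j) (h : ∀ t, firstSuccess p t ≤ 0) (t : ℕ) :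
    p t = 0 := by
  induction t using Nat.strong_induction_on with
  | _ t ih =>
    have hprod : ∏ j ∈ Finset.range t, (1 - p j) = 1 :=
      Finset.prod_eq_one fun j hj => by rw [ih j (Finset.mem_range.1 hj), sub_zero]
    have := h t
    rw [firstSuccess, hprod, one_mul] at this
    exact le_antisymm this (hp t)

end FirstSuccess

namespace GameG1

open ConcurrentGame

abbrev aa : Fin 2 → Bool := fun _ => false
abbrev bb : Fin 2 → Bool := fun _ => true

def loopHist (t : ℕ) : Hist (Fin 2) G1State Bool := List.replicate t (G1State.s1, aa)

lemma length_loopHist (t : ℕ) : (loopHist t).length = t := List.length_replicate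

lemma tr_eq_s1_iff (s : G1State) (b : Fin 2 → Bool) :
    gameG1.tr s b = .s1 ↔ s = .s1 ∧ b = aa := by
  cases s <;> cases h0 : b 0 <;> cases h1 : b 1 <;>
    simp [gameG1, funext_iff, Fin.forall_fin_two, h0, h1]

lemma tr_eq_l_iff (s : G1State) (b : Fin 2 → Bool) :
    gameG1.tr s b = .l ↔ s = .l ∨ s = .s1 ∧ b = bb := by
  cases s <;> cases h0 : b 0 <;> cases h1 : b 1 <;>
    simp [gameG1, funext_iff, Fin.forall_fin_two, h0, h1]

lemma terminal_l : gameG1.Terminal .l := fun _ _ => rfl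

lemma terminal_r : gameG1.Terminal .r := fun _ _ => rfl

lemma rew_zero_l : gameG1.rew 0 .l = -1 := rfl

lemma rew_zero_r : gameG1.rew 0 .r = 1 := rfl

lemma rew_one (s : G1State) : gameG1.rew 1 s = -gameG1.rew 0 s := by
  cases s <;> simp [gameG1]

lemma histOf_replicate_aa (t : ℕ) :
    gameG1.histOf .s1 (List.replicate t aa) = (loopHist t, .s1) := by
  induction t with
  | zero => rfl
  | succ t ih => simp [List.replicate_succ, histOf, (tr_eq_s1_iff _ _).2, ih, loopHist]

section Plays

variable {σ : Profile gameG1} (u : USpace)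

lemma stateAt_eq_s1_iff (n : ℕ) :
    gameG1.stateAt σ .s1 u n = .s1 ↔ gameG1.samplePrefix σ .s1 u n = List.replicate n aa := by
  induction n with
  | zero => exact iff_of_true rfl rfl
  | succ n ih =>
    rw [stateAt_succ, tr_eq_s1_iff, ih, samplePrefix_succ, List.replicate_succ',
      List.append_singleton_inj]

lemma histOf_samplePrefix_of_stateAt_eq_s1 {n : ℕ} (h : gameG1.stateAt σ .s1 u n = .s1) :
    gameG1.histOf .s1 (gameG1.samplePrefix σ .s1 u n) = (loopHist n, .s1) := by
  rw [(stateAt_eq_s1_iff u n).1 h, histOf_replicate_aa]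

lemma exists_samplePrefix_of_stateAt_eq_l {n : ℕ} (h : gameG1.stateAt σ .s1 u n = .l) :
    ∃ m, gameG1.samplePrefix σ .s1 u (m + 1) = List.replicate m aa ++ [bb] := by
  induction n with
  | zero => cases h
  | succ n ih =>
    rw [stateAt_succ, tr_eq_l_iff] at h
    rcases h with hl | ⟨hs1, hbb⟩
    · exact ih hl
    · exact ⟨n, by rw [samplePrefix_succ, (stateAt_eq_s1_iff u n).1 hs1, hbb]⟩

lemma mem_visitEvent_l_of_samplePrefix {m : ℕ}
    (h : gameG1.samplePrefix σ .s1 u (m + 1) = List.replicate m aa ++ [bb]) :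
    u ∈ gameG1.visitEvent σ .s1 .l :=
  ⟨m + 1, by rw [stateAt, h, histOf_append, histOf_replicate_aa]; rfl⟩

lemma not_mem_visitEvent_r_of_mem_l (hl : u ∈ gameG1.visitEvent σ .s1 .l) :
    u ∉ gameG1.visitEvent σ .s1 .r := by
  rintro ⟨n, hn⟩
  obtain ⟨m, hm⟩ := hl
  have hl' := stateAt_eq_of_terminal u m terminal_l hm (le_max_left m n)
  rw [stateAt_eq_of_terminal u n terminal_r hn (le_max_right m n)] at hl'
  exact absurd hl' (by decide)

lemma payOf_stateAt (i : Fin 2) :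
    gameG1.payOf i (gameG1.stateAt σ .s1 u) =
      (gameG1.visitEvent σ .s1 .l).indicator (fun _ => gameG1.rew i .l) u +
        (gameG1.visitEvent σ .s1 .r).indicator (fun _ => gameG1.rew i .r) u := by
  by_cases hl : u ∈ gameG1.visitEvent σ .s1 .l
  · rw [Set.indicator_of_mem hl, Set.indicator_of_notMem (not_mem_visitEvent_r_of_mem_l u hl),
      add_zero]
    obtain ⟨n, hn⟩ := hl
    exact payOf_of_eventually_eq
      (eventually_atTop.2 ⟨n, fun m => stateAt_eq_of_terminal u n terminal_l hn⟩) i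
  by_cases hr : u ∈ gameG1.visitEvent σ .s1 .r
  · rw [Set.indicator_of_notMem hl, Set.indicator_of_mem hr, zero_add]
    obtain ⟨n, hn⟩ := hr
    exact payOf_of_eventually_eq
      (eventually_atTop.2 ⟨n, fun m => stateAt_eq_of_terminal u n terminal_r hn⟩) i
  · have hs1 : ∀ n, gameG1.stateAt σ .s1 u n = .s1 := fun n => by
      cases h : gameG1.stateAt σ .s1 u n
      exacts [rfl, (hl ⟨n, h⟩).elim, (hr ⟨n, h⟩).elim]
    rw [Set.indicator_of_notMem hl, Set.indicator_of_notMem hr, add_zero,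
      payOf_of_eventually_eq (Eventually.of_forall hs1) i]
    rfl

variable (σ)

lemma expPay_eq (i : Fin 2) :
    gameG1.expPay σ .s1 i =
      gameG1.rew i .l * gameG1.probVisit σ .s1 {.l} + gameG1.rew i .r * gameG1.probVisit σ .s1 {.r} := by
  have hl := measurableSet_visitEvent (G := gameG1) (σ := σ) (s₀ := .s1) .l
  have hr := measurableSet_visitEvent (G := gameG1) (σ := σ) (s₀ := .s1) .r
  rw [expPay, integral_congr_ae (Eventually.of_forall (payOf_stateAt (σ := σ) · i)),
    integral_add ((integrable_const _).indicator hl) ((integrable_const _).indicator hr),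
    integral_indicator_const _ hl, integral_indicator_const _ hr, smul_eq_mul, smul_eq_mul,
    mul_comm, mul_comm (uHaar.real _)]
  rfl

lemma expPay_zero_add_expPay_one : gameG1.expPay σ .s1 0 + gameG1.expPay σ .s1 1 = 0 := by
  rw [expPay_eq, expPay_eq, rew_one, rew_one]
  ring

end Plays

def bOnlyAt (i : Fin 2) (t : ℕ) : gameG1.Strategy i where
  prob x _ c := if c = decide (x.length = t) then 1 else 0
  nonneg _ _ _ := by split_ifs <;> norm_num
  sum_one _ _ := by simp
  supp _ _ c _ := Set.mem_univ c

def alwaysA (i : Fin 2) : gameG1.Strategy i where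
  prob _ _ c := if c = false then 1 else 0
  nonneg _ _ _ := by split_ifs <;> norm_num
  sum_one _ _ := by simp
  supp _ _ c _ := Set.mem_univ c

def bProb {i : Fin 2} (τ : gameG1.Strategy i) (j : ℕ) : ℝ := τ.prob (loopHist j) .s1 true

lemma bProb_mem_Icc {i : Fin 2} (τ : gameG1.Strategy i) (j : ℕ) : bProb τ j ∈ Set.Icc (0 : ℝ) 1 :=
  ⟨τ.nonneg _ _ _, by
    have := τ.nonneg (loopHist j) .s1 false
    rw [Strategy.prob_false] at this
    exact sub_nonneg.1 this⟩

lemma visitEvent_r_eq_compl {σ : Profile gameG1}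
    (h : ∀ u, ∃ n, gameG1.stateAt σ .s1 u n ≠ .s1) :
    gameG1.visitEvent σ .s1 .r = (gameG1.visitEvent σ .s1 .l)ᶜ := by
  ext u
  refine ⟨fun hr hl => not_mem_visitEvent_r_of_mem_l u hl hr, fun hl => ?_⟩
  obtain ⟨n, hn⟩ := h u
  cases h' : gameG1.stateAt σ .s1 u n
  exacts [(hn h').elim, (hl ⟨n, h'⟩).elim, ⟨n, h'⟩]

lemma uHaar_samplePrefix_eq_replicate_append (σ : Profile gameG1) (t : ℕ) :
    uHaar {u | gameG1.samplePrefix σ .s1 u (t + 1) = List.replicate t aa ++ [bb]} =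
      ENNReal.ofReal ((∏ j ∈ Finset.range t, gameG1.weight σ (loopHist j) .s1 aa) *
        gameG1.weight σ (loopHist t) .s1 bb) := by
  set b : ℕ → Fin 2 → Bool := fun j => if j < t then aa else bb
  have hb : ∀ j ≤ t, (List.range j).map b = List.replicate j aa := fun j hj =>
    List.eq_replicate_iff.2 ⟨by simp, by simp only [List.mem_map, List.mem_range, b]; grind⟩
  have hweight : ∀ j ≤ t, gameG1.weightAfter σ .s1 ((List.range j).map b) =
      gameG1.weight σ (loopHist j) .s1 := fun j hj => by
    rw [hb j hj, weightAfter, histOf_replicate_aa]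
  rw [show List.replicate t aa ++ [bb] = (List.range (t + 1)).map b by
      rw [List.range_succ, List.map_append, hb t le_rfl]; simp [b],
    uHaar_samplePrefix_eq_map_range, Finset.prod_range_succ, hweight t le_rfl,
    Finset.prod_congr rfl fun j hj => by rw [hweight j (Finset.mem_range.1 hj).le]]
  congr 2
  · exact Finset.prod_congr rfl fun j hj => by simp [b, Finset.mem_range.1 hj]
  · simp [b]

section Deviation

variable (σ : Profile gameG1) {i k : Fin 2} (hik : i ≠ k) (t : ℕ)

lemma sampledProfile_update_bOnlyAt (u : USpace) (n : ℕ) :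
    gameG1.sampledProfile (Function.update σ i (bOnlyAt i t)) .s1 u n i = decide (n = t) := by
  have h := prob_sampledProfile_ne_zero (σ := Function.update σ i (bOnlyAt i t)) (s₀ := .s1) u n i
  rw [Function.update_self] at h
  simpa [bOnlyAt, length_histOf, length_samplePrefix] using h

include hik in
lemma weight_update_bOnlyAt (j : ℕ) (b : Fin 2 → Bool) :
    gameG1.weight (Function.update σ i (bOnlyAt i t)) (loopHist j) .s1 b =
      (if b i = decide (j = t) then 1 else 0) * (σ k).prob (loopHist j) .s1 (b k) := by
  fin_cases i <;> fin_cases k <;>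
    simp_all [weight, Fin.prod_univ_two, bOnlyAt, length_loopHist, mul_comm]

lemma visitEvent_l_update_bOnlyAt :
    gameG1.visitEvent (Function.update σ i (bOnlyAt i t)) .s1 .l =
      {u | gameG1.samplePrefix (Function.update σ i (bOnlyAt i t)) .s1 u (t + 1) =
        List.replicate t aa ++ [bb]} := by
  ext u
  refine ⟨fun ⟨n, hn⟩ => ?_, fun h => mem_visitEvent_l_of_samplePrefix u h⟩
  obtain ⟨m, hm⟩ := exists_samplePrefix_of_stateAt_eq_l u hn
  rw [samplePrefix_succ, List.append_singleton_inj] at hm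
  have hmt : m = t := by simpa [hm.2] using sampledProfile_update_bOnlyAt σ (i := i) t u m
  subst hmt
  rw [Set.mem_ofPred_eq, samplePrefix_succ, hm.1, hm.2]

lemma stateAt_update_bOnlyAt_ne_s1 (u : USpace) :
    gameG1.stateAt (Function.update σ i (bOnlyAt i t)) .s1 u (t + 1) ≠ .s1 := by
  rw [Ne, stateAt_eq_s1_iff, List.replicate_succ', samplePrefix_succ, List.append_singleton_inj]
  intro h
  simpa [sampledProfile_update_bOnlyAt] using congrFun h.2 i

include hik

lemma probVisit_l_update_bOnlyAt :
    gameG1.probVisit (Function.update σ i (bOnlyAt i t)) .s1 {.l} = firstSuccess (bProb (σ k)) t := by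
  have hq : (∏ j ∈ Finset.range t,
      gameG1.weight (Function.update σ i (bOnlyAt i t)) (loopHist j) .s1 aa) *
      gameG1.weight (Function.update σ i (bOnlyAt i t)) (loopHist t) .s1 bb =
      firstSuccess (bProb (σ k)) t := by
    have hloop : ∀ j ∈ Finset.range t,
        gameG1.weight (Function.update σ i (bOnlyAt i t)) (loopHist j) .s1 aa = 1 - bProb (σ k) j :=
      fun j hj => by
        simp [weight_update_bOnlyAt σ hik, (Finset.mem_range.1 hj).ne, Strategy.prob_false, bProb]
    rw [Finset.prod_congr rfl hloop, firstSuccess]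
    simp [weight_update_bOnlyAt σ hik, bProb]
  show (uHaar (gameG1.visitEvent _ .s1 .l)).toReal = _
  rw [visitEvent_l_update_bOnlyAt, uHaar_samplePrefix_eq_replicate_append, hq,
    ENNReal.toReal_ofReal (firstSuccess_nonneg (fun j => bProb_mem_Icc (σ k) j) t)]

lemma probVisit_r_update_bOnlyAt :
    gameG1.probVisit (Function.update σ i (bOnlyAt i t)) .s1 {.r} =
      1 - firstSuccess (bProb (σ k)) t := by
  show (uHaar (gameG1.visitEvent _ .s1 .r)).toReal = _
  rw [visitEvent_r_eq_compl fun u => ⟨t + 1, stateAt_update_bOnlyAt_ne_s1 σ t u⟩,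
    ← measureReal_def, probReal_compl_eq_one_sub (measurableSet_visitEvent _), measureReal_def]
  exact congrArg (1 - ·) (probVisit_l_update_bOnlyAt σ hik t)

lemma expPay_update_bOnlyAt (j : Fin 2) :
    gameG1.expPay (Function.update σ i (bOnlyAt i t)) .s1 j =
      gameG1.rew j .l * firstSuccess (bProb (σ k)) t +
        gameG1.rew j .r * (1 - firstSuccess (bProb (σ k)) t) := by
  rw [expPay_eq, probVisit_l_update_bOnlyAt σ hik, probVisit_r_update_bOnlyAt σ hik]

end Deviation

lemma expPay_update_alwaysA {σ : Profile gameG1} (h : ∀ j, bProb (σ 0) j = 0) :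
    gameG1.expPay (Function.update σ 1 (alwaysA 1)) .s1 1 = 0 := by
  have hs1 : ∀ u n, gameG1.stateAt (Function.update σ 1 (alwaysA 1)) .s1 u n = .s1 := by
    intro u n
    induction n with
    | zero => rfl
    | succ n ih =>
      rw [stateAt_succ, tr_eq_s1_iff]
      refine ⟨ih, funext fun i => ?_⟩
      have hp := prob_sampledProfile_ne_zero (σ := Function.update σ 1 (alwaysA 1)) (s₀ := .s1) u n i
      rw [histOf_samplePrefix_of_stateAt_eq_s1 u ih, ih] at hp
      fin_cases i
      · rw [Function.update_of_ne (by decide)] at hp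
        by_contra hb
        simp_all [bProb]
      · simpa [alwaysA] using hp
  have hpay : ∀ u, gameG1.payOf 1 (gameG1.stateAt (Function.update σ 1 (alwaysA 1)) .s1 u) = 0 :=
    fun u => payOf_of_eventually_eq (.of_forall (hs1 u)) 1
  simp [expPay, hpay]

end GameG1

open GameG1 in
/-- The initialised game `(G₁, s₁)` has no Nash equilibrium. -/
theorem gameG1_no_nash_equilibrium :
    ¬ ∃ σ : Profile gameG1, gameG1.IsNash σ G1State.s1 := by
  rintro ⟨σ, hNash⟩
  have hzero := expPay_zero_add_expPay_one σ
  have hv0 : 1 ≤ gameG1.expPay σ .s1 0 := le_of_forall_pos_lt_add fun ε hε => by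
    obtain ⟨t, ht⟩ := exists_firstSuccess_lt (fun j => (bProb_mem_Icc (σ 1) j).2) (half_pos hε)
    have hdev := hNash 0 (bOnlyAt 0 t)
    rw [expPay_update_bOnlyAt σ zero_ne_one, rew_zero_l, rew_zero_r] at hdev
    linarith
  have hb0 : ∀ t, bProb (σ 0) t = 0 :=
    eq_zero_of_firstSuccess_nonpos (fun j => (bProb_mem_Icc (σ 0) j).1) fun t => by
      have hdev := hNash 1 (bOnlyAt 1 t)
      rw [expPay_update_bOnlyAt σ one_ne_zero, rew_one, rew_one, rew_zero_l, rew_zero_r] at hdev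
      linarith
  have hdev := hNash 1 (alwaysA 1)
  rw [expPay_update_alwaysA hb0] at hdev
  linarith

end
end

section
/- Let G = (V, E) be a finite directed graph in which every vertex has at least one outgoing edge, let n = |V| ≥ 1 and let v_0 ∈ V. Then G has a Hamiltonian cycle (a cycle visiting every vertex exactly once) if and only if the game (𝒢, v_0) has a positional Nash equilibrium with payoff ≥ (1, 1/n, (n−1)/n), i.e. with expected payoff ≥ 1 for player 0, ≥ 1/n for player 1 and ≥ (n−1)/n for player 2. -/
/-!
A positional profile of the game amounts to a successor function `g` choosing an out-edge at
every vertex, and every run of it follows the orbit of `v₀` under `g`. Player 0 is paid 1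
whatever happens and players 1 and 2 have a single action each, so every profile is a Nash
equilibrium. Along the orbit, `v₀` is visited exactly at the multiples of its minimal period `q`
(only at time 0 when `q = 0`), so players 1 and 2 get mean payoffs `1/q` and `1 - 1/q`, reading
`1/0 = 0`. The payoff bounds therefore say `q = n`, i.e. the orbit of `v₀` is a Hamiltonian cycle.
-/

open MeasureTheory Filter

/-! ## Statement: Hamiltonian cycles vs. positional Nash equilibria -/

noncomputable section

/-- The three-player turn-based game built from a directed graph `(V, E)` and `v₀ ∈ V`:
the states are the vertices, all controlled by player 0 (players 1 and 2 have only the trivial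
action of staying put available, player 0 chooses a successor of the current vertex).
Player 0 receives reward 1 at every state, player 1 receives reward 1 at `v₀` and 0 elsewhere,
and player 2 receives reward 0 at `v₀` and 1 elsewhere. -/
def hamGame {V : Type} [Fintype V] [DecidableEq V] [Nonempty V]
    (E : V → V → Prop) [DecidableRel E] (hout : ∀ v, ∃ w, E v w) (v₀ : V) :
    ConcurrentGame (Fin 3) V V where
  act i v := if i = 0 then {w | E v w} else {v}
  act_nonempty i v := by
    by_cases h : i = 0
    · simpa [h, Set.Nonempty] using hout v
    · simp [h]
  tr v a := if E v (a 0) then a 0 else v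
  rew i v :=
    if i = 0 then 1
    else if i = 1 then (if v = v₀ then 1 else 0)
    else (if v = v₀ then 0 else 1)

open Finset Function

theorem card_filter_dvd_range_succ (q m : ℕ) : #{j ∈ range (m + 1) | q ∣ j} = m / q + 1 := by
  rw [← Nat.count_eq_card_filter_range, Nat.count_succ', Nat.count_eq_card_filter_range,
    Nat.card_multiples, if_pos (dvd_zero q)]

/-- For `q = 0` only `j = 0` is counted, and the limit is `(0 : ℝ)⁻¹ = 0`. -/
theorem tendsto_card_filter_dvd_range_div (q : ℕ) :
    Tendsto (fun m : ℕ => (#{j ∈ range m | q ∣ j} : ℝ) / m) atTop (nhds (q : ℝ)⁻¹) := by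
  have hbounds : ∀ m : ℕ, 1 ≤ m →
      (q : ℝ)⁻¹ * m ≤ #{j ∈ range m | q ∣ j} ∧
        (#{j ∈ range m | q ∣ j} : ℝ) ≤ (q : ℝ)⁻¹ * m + 1 := by
    intro m hm
    obtain ⟨m, rfl⟩ := Nat.exists_eq_add_of_le' hm
    rw [card_filter_dvd_range_succ]
    rcases Nat.eq_zero_or_pos q with rfl | hq
    · simp
    have hlow : m + 1 ≤ q * (m / q + 1) := Nat.lt_mul_div_succ m hq
    have hup : q * (m / q) ≤ m + 1 := (Nat.mul_div_le m q).trans m.le_succ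
    have hq' : (0 : ℝ) < q := by exact_mod_cast hq
    constructor
    · rw [inv_mul_le_iff₀ hq']; exact_mod_cast hlow
    · have : ((m / q : ℕ) : ℝ) ≤ (q : ℝ)⁻¹ * ↑(m + 1) := by
        rw [le_inv_mul_iff₀ hq']; exact_mod_cast hup
      push_cast at this ⊢; linarith
  have hupper : Tendsto (fun m : ℕ => (q : ℝ)⁻¹ + 1 / m) atTop (nhds (q : ℝ)⁻¹) := by
    simpa using tendsto_one_div_atTop_nhds_zero_nat.const_add (q : ℝ)⁻¹
  refine tendsto_of_tendsto_of_tendsto_of_le_of_le' tendsto_const_nhds hupper ?_ ?_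
  · filter_upwards [eventually_ge_atTop 1] with m hm
    have hm' : (0 : ℝ) < m := by exact_mod_cast hm
    rw [le_div_iff₀ hm']; exact (hbounds m hm).1
  · filter_upwards [eventually_ge_atTop 1] with m hm
    have hm' : (0 : ℝ) < m := by exact_mod_cast hm
    rw [div_le_iff₀ hm', add_mul, one_div_mul_cancel hm'.ne']; exact (hbounds m hm).2

theorem minimalPeriod_eq_of_injective_zmod {α : Type*} {n : ℕ} {f : ZMod n → α}
    (hf : Injective f) {g : α → α} (hg : ∀ k, g (f k) = f (k + 1)) (k : ZMod n) :
    minimalPeriod g (f k) = n := by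
  have hiter : ∀ j : ℕ, g^[j] (f k) = f (k + j) := by
    intro j
    induction j with
    | zero => simp
    | succ j ih => rw [iterate_succ_apply', ih, hg]; push_cast; ring_nf
  refine Nat.dvd_right_iff_eq.mp fun j => ?_
  rw [← isPeriodicPt_iff_minimalPeriod_dvd, IsPeriodicPt, IsFixedPt, hiter, hf.eq_iff,
    add_eq_left, ZMod.natCast_eq_zero_iff]

theorem exists_cycle_iff_exists_minimalPeriod_eq_card {α : Type*} [Fintype α]
    (E : α → α → Prop) (a : α) :
    (∃ f : ZMod (Fintype.card α) → α, Bijective f ∧ ∀ k, E (f k) (f (k + 1))) ↔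
      ∃ g : α → α, (∀ x, E x (g x)) ∧ minimalPeriod g a = Fintype.card α := by
  have : Nonempty α := ⟨a⟩
  have : NeZero (Fintype.card α) := ⟨Fintype.card_ne_zero⟩
  constructor
  · rintro ⟨f, hf, hE⟩
    let e := Equiv.ofBijective f hf
    have hfe : ∀ x, f (e.symm x) = x := e.apply_symm_apply
    refine ⟨fun x => f (e.symm x + 1), fun x => by simpa [hfe] using hE (e.symm x), ?_⟩
    simpa [hfe] using minimalPeriod_eq_of_injective_zmod hf.1 (g := fun x => f (e.symm x + 1))
      (by simp [e]) (e.symm a)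
  · rintro ⟨g, hE, hg⟩
    have hcast : ∀ j : ℕ, g^[(j : ZMod (Fintype.card α)).val] a = g^[j] a := fun j => by
      rw [ZMod.val_natCast, ← hg, iterate_mod_minimalPeriod_eq]
    refine ⟨fun k => g^[k.val] a,
      (Fintype.bijective_iff_injective_and_card _).mpr ⟨fun k l hkl => ?_, ZMod.card _⟩,
      fun k => ?_⟩
    · refine ZMod.val_injective _ (iterate_injOn_Iio_minimalPeriod ?_ ?_ hkl) <;>
        simp [hg, ZMod.val_lt]
    · dsimp only
      rw [← ZMod.natCast_zmod_val k, ← Nat.cast_succ, hcast, hcast, iterate_succ_apply']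
      exact hE _

theorem coordReal_mem_Ico (u : USpace) (n : ℕ) : coordReal u n ∈ Set.Ico (0 : ℝ) 1 := by
  simpa [coordReal] using ((AddCircle.equivIco 1 0) (u n)).2

instance isProbabilityMeasure_uHaar : IsProbabilityMeasure uHaar where
  measure_univ := ENNReal.inv_mul_cancel
    (isOpen_univ.measure_ne_zero Measure.addHaar Set.univ_nonempty)
    isCompact_univ.measure_lt_top.ne

namespace ConcurrentGame

theorem pick_ite {P A : Type} [Fintype P] [DecidableEq P] [Fintype A] [Nonempty A]
    [DecidableEq (P → A)] (b : P → A) {u : ℝ} (hu : u ∈ Set.Ico (0 : ℝ) 1) :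
    pick (fun a => if a = b then 1 else 0) u = b := by
  have hcum : ∀ k : ℕ, cum (P := P) (fun a => if a = b then 1 else 0) k =
      if (Fintype.equivFin (P → A) b : ℕ) < k then 1 else 0 := fun k => by
    simp [cum, Finset.sum_ite_eq']
  have hlt : univ.filter (fun k : Fin (Fintype.card (P → A)) =>
      cum (P := P) (fun a => if a = b then 1 else 0) ((k : ℕ) + 1) ≤ u) =
      Iio (Fintype.equivFin (P → A) b) := by
    ext k
    simp only [mem_filter, mem_univ, true_and, hcum, mem_Iio, Fin.lt_def]
    split_ifs with h
    · simp only [hu.2.not_ge, false_iff, not_lt]; omega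
    · simp only [hu.1, true_iff]; omega
  rw [pick, hlt, Fin.card_Iio, dif_pos (Fintype.equivFin (P → A) b).isLt]
  simp

variable {P S A : Type} [Fintype P] [Nonempty P] [Fintype S] [Nonempty S]
  [Fintype A] [Nonempty A] {G : ConcurrentGame P S A}

theorem Strategy.ext {i : P} {τ τ' : G.Strategy i} (h : τ.prob = τ'.prob) : τ = τ' := by
  cases τ; cases τ'; cases h; rfl

theorem Strategy.prob_eq_ite_of_eq_one [DecidableEq A] {i : P} (τ : G.Strategy i)
    {x : Hist P S A} {s : S} {a : A} (h : τ.prob x s a = 1) (b : A) :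
    τ.prob x s b = if b = a then 1 else 0 := by
  have hrest : ∑ c ∈ univ.erase a, τ.prob x s c = 0 := by
    linarith [add_sum_erase univ (τ.prob x s) (mem_univ a), τ.sum_one x s]
  split_ifs with hb
  · rwa [hb]
  by_contra hne
  exact hne <| (sum_eq_zero_iff_of_nonneg fun c _ => τ.nonneg x s c).mp hrest b <|
    mem_erase.mpr ⟨hb, mem_univ b⟩

theorem Strategy.prob_eq_ite_of_act_eq_singleton [DecidableEq A] {i : P} (τ : G.Strategy i)
    (x : Hist P S A) {s : S} {a : A} (h : G.act i s = {a}) (b : A) :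
    τ.prob x s b = if b = a then 1 else 0 := by
  have hzero : ∀ c, c ≠ a → τ.prob x s c = 0 := fun c hc => by
    by_contra hne
    exact hc (by simpa [h] using τ.supp x s c hne)
  refine τ.prob_eq_ite_of_eq_one ?_ b
  rw [← τ.sum_one x s, sum_eq_single a (fun c _ => hzero c) (by simp)]

theorem Strategy.subsingleton {i : P} (h : ∀ s, (G.act i s).Subsingleton) :
    Subsingleton (G.Strategy i) := by
  classical
  refine ⟨fun τ τ' => Strategy.ext (funext₃ fun x s b => ?_)⟩
  obtain ⟨a, ha⟩ :=
    Set.exists_eq_singleton_iff_nonempty_subsingleton.mpr ⟨G.act_nonempty i s, h s⟩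
  rw [τ.prob_eq_ite_of_act_eq_singleton x ha, τ'.prob_eq_ite_of_act_eq_singleton x ha]

theorem histOf_append_singleton_snd (s₀ : S) (l : List (P → A)) (a : P → A) :
    (G.histOf s₀ (l ++ [a])).2 = G.tr (G.histOf s₀ l).2 a := by
  induction l generalizing s₀ with
  | nil => rfl
  | cons b l ih => exact ih _

theorem payOf_of_rew_eq_const {i : P} {r : ℝ} (h : ∀ s, G.rew i s = r) (ss : ℕ → S) :
    G.payOf i ss = r := by
  refine Tendsto.liminf_eq (tendsto_const_nhds.congr' ?_)
  filter_upwards [eventually_ne_atTop 0] with m hm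
  simp [h, hm]

def positional [DecidableEq A] (c : P → S → A) (hc : ∀ i s, c i s ∈ G.act i s) : Profile G :=
  fun i =>
  { prob := fun _ s a => if a = c i s then 1 else 0
    nonneg := fun _ _ _ => by positivity
    sum_one := fun _ _ => by simp
    supp := fun _ s a h => by
      rw [ite_ne_right_iff] at h
      exact h.1 ▸ hc i s }

theorem positional_prob_self [DecidableEq A] (c : P → S → A) (hc : ∀ i s, c i s ∈ G.act i s)
    (i : P) (x : Hist P S A) (s : S) : (positional c hc i).prob x s (c i s) = 1 :=
  if_pos rfl

theorem isPositionalProfile_positional [DecidableEq A] (c : P → S → A)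
    (hc : ∀ i s, c i s ∈ G.act i s) : IsPositionalProfile (positional c hc) :=
  fun i => ⟨fun x s => ⟨c i s, positional_prob_self c hc i x s⟩, fun _ _ _ => rfl⟩

theorem IsPositionalProfile.exists_choice {σ : Profile G} (hσ : IsPositionalProfile σ) :
    ∃ c : P → S → A, (∀ i s, c i s ∈ G.act i s) ∧ ∀ i x s, (σ i).prob x s (c i s) = 1 := by
  choose c hc using fun i s => (hσ i).1 [] s
  have hc' : ∀ i x s, (σ i).prob x s (c i s) = 1 := fun i x s => by
    rw [(hσ i).2 x [] s, hc]
  exact ⟨c, fun i s => (σ i).supp [] s _ (by simp [hc]), hc'⟩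

variable [DecidableEq P]

theorem weight_eq_ite_of_prob_eq_one [DecidableEq A] (σ : Profile G) {x : Hist P S A} {s : S}
    {a : P → A} (h : ∀ i, (σ i).prob x s (a i) = 1) :
    G.weight σ x s = fun b => if b = a then 1 else 0 := by
  funext b
  simp_rw [weight, fun i => (σ i).prob_eq_ite_of_eq_one (h i) (b i), prod_ite_zero, funext_iff,
    prod_const_one, mem_univ, true_imp_iff]

theorem stateAt_succ_s4 (σ : Profile G) (s₀ : S) (u : USpace) (n : ℕ) :
    G.stateAt σ s₀ u (n + 1) = G.tr (G.stateAt σ s₀ u n)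
      (pick (G.weight σ (G.histOf s₀ (G.samplePrefix σ s₀ u n)).1 (G.stateAt σ s₀ u n))
        (coordReal u n)) :=
  histOf_append_singleton_snd ..

variable (G) in
def move (c : P → S → A) (s : S) : S := G.tr s fun i => c i s

theorem stateAt_eq_iterate_move (σ : Profile G) (c : P → S → A)
    (hc : ∀ i x s, (σ i).prob x s (c i s) = 1) (s₀ : S) (u : USpace) (n : ℕ) :
    G.stateAt σ s₀ u n = (G.move c)^[n] s₀ := by
  classical
  induction n with
  | zero => rfl
  | succ n ih =>
    rw [stateAt_succ_s4, weight_eq_ite_of_prob_eq_one σ fun i => hc i _ _,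
      pick_ite _ (coordReal_mem_Ico u n), ih, iterate_succ_apply']
    rfl

theorem expPay_eq_payOf_iterate_move (σ : Profile G) (c : P → S → A)
    (hc : ∀ i x s, (σ i).prob x s (c i s) = 1) (s₀ : S) (i : P) :
    G.expPay σ s₀ i = G.payOf i fun n => (G.move c)^[n] s₀ := by
  have h : ∀ u, G.stateAt σ s₀ u = fun n => (G.move c)^[n] s₀ := fun u =>
    funext (stateAt_eq_iterate_move σ c hc s₀ u)
  simp [expPay, h]

theorem expPay_of_rew_eq_const {i : P} {r : ℝ} (h : ∀ s, G.rew i s = r) (σ : Profile G)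
    (s₀ : S) : G.expPay σ s₀ i = r := by
  simp [expPay, payOf_of_rew_eq_const h]

end ConcurrentGame

namespace hamGame

variable {V : Type} [Fintype V] [DecidableEq V] [Nonempty V] {E : V → V → Prop}
  [DecidableRel E] {hout : ∀ v, ∃ w, E v w} {v₀ : V}

@[simp]
theorem rew_zero (v : V) : (hamGame E hout v₀).rew 0 v = 1 := rfl

@[simp]
theorem rew_one (v : V) : (hamGame E hout v₀).rew 1 v = if v = v₀ then 1 else 0 := rfl

@[simp]
theorem rew_two (v : V) : (hamGame E hout v₀).rew 2 v = if v = v₀ then 0 else 1 := rfl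

theorem act_zero (v : V) : (hamGame E hout v₀).act 0 v = {w | E v w} := rfl

theorem act_of_ne_zero {i : Fin 3} (hi : i ≠ 0) (v : V) : (hamGame E hout v₀).act i v = {v} :=
  if_neg hi

theorem expPay_zero (σ : Profile (hamGame E hout v₀)) (s : V) :
    (hamGame E hout v₀).expPay σ s 0 = 1 :=
  ConcurrentGame.expPay_of_rew_eq_const rew_zero σ s

theorem isNash (σ : Profile (hamGame E hout v₀)) : (hamGame E hout v₀).IsNash σ v₀ := by
  intro i τ
  by_cases hi : i = 0
  · subst hi
    rw [expPay_zero, expPay_zero]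
  · have : Subsingleton ((hamGame E hout v₀).Strategy i) :=
      ConcurrentGame.Strategy.subsingleton fun v => by
        rw [act_of_ne_zero hi]; exact Set.subsingleton_singleton
    rw [Function.update_eq_self_iff.mpr (Subsingleton.elim τ (σ i))]

theorem move_eq {c : Fin 3 → V → V} (hc : ∀ i v, c i v ∈ (hamGame E hout v₀).act i v) :
    (hamGame E hout v₀).move c = c 0 :=
  funext fun v => if_pos (hc 0 v)

theorem exists_isPositionalProfile_expPay_eq {g : V → V} (hg : ∀ v, E v (g v)) :
    ∃ σ : Profile (hamGame E hout v₀), ConcurrentGame.IsPositionalProfile σ ∧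
      ∀ i, (hamGame E hout v₀).expPay σ v₀ i =
        (hamGame E hout v₀).payOf i fun n => g^[n] v₀ := by
  let c : Fin 3 → V → V := fun i v => if i = 0 then g v else v
  have hc : ∀ i v, c i v ∈ (hamGame E hout v₀).act i v := fun i v => by
    by_cases hi : i = 0
    · simp only [c, if_pos hi]
      rw [hi, act_zero]
      exact hg v
    · simp [c, hi, act_of_ne_zero hi]
  refine ⟨ConcurrentGame.positional c hc, ConcurrentGame.isPositionalProfile_positional c hc,
    fun i => ?_⟩
  rw [ConcurrentGame.expPay_eq_payOf_iterate_move _ c (ConcurrentGame.positional_prob_self c hc),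
    move_eq hc]
  rfl

theorem exists_expPay_eq_of_isPositionalProfile {σ : Profile (hamGame E hout v₀)}
    (hσ : ConcurrentGame.IsPositionalProfile σ) :
    ∃ g : V → V, (∀ v, E v (g v)) ∧
      ∀ i, (hamGame E hout v₀).expPay σ v₀ i =
        (hamGame E hout v₀).payOf i fun n => g^[n] v₀ := by
  obtain ⟨c, hc, hprob⟩ := hσ.exists_choice
  refine ⟨c 0, hc 0, fun i => ?_⟩
  rw [ConcurrentGame.expPay_eq_payOf_iterate_move σ c hprob, move_eq hc]

theorem tendsto_mean_rew_one_iterate (g : V → V) :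
    Tendsto (fun m : ℕ => (∑ j ∈ range m, (hamGame E hout v₀).rew 1 (g^[j] v₀)) / m) atTop
      (nhds (minimalPeriod g v₀ : ℝ)⁻¹) := by
  have hdvd : ∀ j, g^[j] v₀ = v₀ ↔ minimalPeriod g v₀ ∣ j := fun _ =>
    isPeriodicPt_iff_minimalPeriod_dvd
  simp only [rew_one, sum_boole, hdvd]
  exact tendsto_card_filter_dvd_range_div _

theorem payOf_one_iterate (g : V → V) :
    (hamGame E hout v₀).payOf 1 (fun n => g^[n] v₀) = (minimalPeriod g v₀ : ℝ)⁻¹ :=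
  (tendsto_mean_rew_one_iterate g).liminf_eq

theorem payOf_two_iterate (g : V → V) :
    (hamGame E hout v₀).payOf 2 (fun n => g^[n] v₀) = 1 - (minimalPeriod g v₀ : ℝ)⁻¹ := by
  have hmean := tendsto_mean_rew_one_iterate (hout := hout) (v₀ := v₀) g
  refine ((hmean.const_sub 1).congr' ?_).liminf_eq
  filter_upwards [eventually_ne_atTop 0] with m hm
  have hm' : (m : ℝ) ≠ 0 := Nat.cast_ne_zero.mpr hm
  have hrew : ∀ v, (hamGame E hout v₀).rew 2 v = 1 - (hamGame E hout v₀).rew 1 v := fun v => by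
    by_cases hv : v = v₀ <;> simp [hv]
  simp only [hrew, sum_sub_distrib, sum_const, card_range, nsmul_eq_mul, mul_one, sub_div,
    div_self hm']

end hamGame

/-- For a finite directed graph `G = (V, E)` in which every vertex has an outgoing edge,
`n = |V| ≥ 1` and `v₀ ∈ V`: `G` has a Hamiltonian cycle iff the associated game has a
positional Nash equilibrium from `v₀` with payoff at least `(1, 1/n, (n-1)/n)`. -/
theorem hamiltonian_iff_positional_nash {V : Type} [Fintype V] [DecidableEq V] [Nonempty V]
    (E : V → V → Prop) [DecidableRel E] (hout : ∀ v, ∃ w, E v w) (v₀ : V) :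
    (∃ f : ZMod (Fintype.card V) → V, Function.Bijective f ∧ ∀ k, E (f k) (f (k + 1)))
      ↔ ∃ σ : Profile (hamGame E hout v₀), ConcurrentGame.IsPositionalProfile σ ∧
          (hamGame E hout v₀).IsNash σ v₀ ∧
          1 ≤ (hamGame E hout v₀).expPay σ v₀ 0 ∧
          1 / (Fintype.card V : ℝ) ≤ (hamGame E hout v₀).expPay σ v₀ 1 ∧
          ((Fintype.card V : ℝ) - 1) / (Fintype.card V : ℝ) ≤ (hamGame E hout v₀).expPay σ v₀ 2 := by
  have hn : (Fintype.card V : ℝ) ≠ 0 := Nat.cast_ne_zero.mpr Fintype.card_ne_zero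
  have hsub : ((Fintype.card V : ℝ) - 1) / Fintype.card V = 1 - (Fintype.card V : ℝ)⁻¹ := by
    field_simp
  rw [exists_cycle_iff_exists_minimalPeriod_eq_card E v₀]
  constructor
  · rintro ⟨g, hg, hper⟩
    obtain ⟨σ, hσ, hpay⟩ :=
      hamGame.exists_isPositionalProfile_expPay_eq (hout := hout) (v₀ := v₀) hg
    refine ⟨σ, hσ, hamGame.isNash σ, (hamGame.expPay_zero σ v₀).ge, ?_, ?_⟩
    · rw [hpay, hamGame.payOf_one_iterate, hper, one_div]
    · rw [hpay, hamGame.payOf_two_iterate, hper, hsub]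
  · rintro ⟨σ, hσ, -, -, h1, h2⟩
    obtain ⟨g, hg, hpay⟩ := hamGame.exists_expPay_eq_of_isPositionalProfile hσ
    rw [hpay, hamGame.payOf_one_iterate, one_div] at h1
    rw [hpay, hamGame.payOf_two_iterate, hsub, sub_le_sub_iff_left] at h2
    exact ⟨g, hg, by exact_mod_cast inv_injective (le_antisymm h2 h1)⟩
end
end

section
/- For every real p with 0 < p < 1, setting q = 1 − p, the function f(x) = (p + q·p·x)/(1 − q²x²) attains its maximum over the set {x ∈ [0,1] : (1−p)x² − 2x + 1 ≥ 0} at x₀ = (1−√p)/(1−p), and the maximum value f(x₀) equals √p. -/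
/-!
Write `p = s²` with `0 < s < 1`, so that `1 - p = (1 - s)(1 + s)` and `x₀ = 1/(1 + s)`.
The factor `1 + (1 - p)x` cancels from `f`, leaving `f(x) = p / (1 - (1 - p)x)`, which increases
on `[0, 1]`. The constraint factors as `(1 - (1 + s)x)(1 - (1 - s)x) ≥ 0`, and the second factor is
positive for `x ≤ 1`, so the feasible set is `[0, x₀]`. Hence the maximum is
`f(x₀) = s² / (1 - (1 - s)) = s`.
-/

lemma add_mul_mul_div_one_sub_sq_mul_sq {p q x : ℝ} (h : 1 + q * x ≠ 0) :
    (p + q * p * x) / (1 - q ^ 2 * x ^ 2) = p / (1 - q * x) := by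
  rw [show p + q * p * x = p * (1 + q * x) by ring,
    show 1 - q ^ 2 * x ^ 2 = (1 - q * x) * (1 + q * x) by ring, mul_div_mul_right _ _ h]

lemma one_sub_div_one_sub_sq {s : ℝ} (hs : s ≠ 1) :
    (1 - s) / (1 - s ^ 2) = 1 / (1 + s) := by
  rw [show 1 - s ^ 2 = (1 - s) * (1 + s) by ring, div_mul_cancel_left₀ (sub_ne_zero.2 hs.symm),
    one_div]

lemma one_sub_sq_mul_sq_sub_two_mul_add_one_nonneg_iff {s x : ℝ} (hs0 : 0 < s) (hs1 : s ≤ 1)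
    (hx : x ≤ 1) : 0 ≤ (1 - s ^ 2) * x ^ 2 - 2 * x + 1 ↔ x ≤ 1 / (1 + s) := by
  have hpos : 0 < 1 - (1 - s) * x := by nlinarith
  rw [show (1 - s ^ 2) * x ^ 2 - 2 * x + 1 = (1 - (1 + s) * x) * (1 - (1 - s) * x) by ring,
    mul_nonneg_iff_of_pos_right hpos, le_div_iff₀ (by positivity), sub_nonneg, mul_comm]

/-- For `0 < p < 1` and `q = 1 - p`, the function `f(x) = (p + q·p·x)/(1 - q²x²)` attains its
maximum over `{x ∈ [0,1] : (1-p)x² - 2x + 1 ≥ 0}` at `x₀ = (1 - √p)/(1 - p)`, and the maximum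
value `f(x₀)` equals `√p`. -/
theorem max_of_f_eq_sqrt (p : ℝ) (hp0 : 0 < p) (hp1 : p < 1) :
    ((1 - Real.sqrt p) / (1 - p) ∈
        {x : ℝ | x ∈ Set.Icc (0:ℝ) 1 ∧ 0 ≤ (1 - p) * x ^ 2 - 2 * x + 1}) ∧
    (∀ x ∈ {x : ℝ | x ∈ Set.Icc (0:ℝ) 1 ∧ 0 ≤ (1 - p) * x ^ 2 - 2 * x + 1},
        (p + (1 - p) * p * x) / (1 - (1 - p) ^ 2 * x ^ 2) ≤
          (p + (1 - p) * p * ((1 - Real.sqrt p) / (1 - p))) /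
            (1 - (1 - p) ^ 2 * ((1 - Real.sqrt p) / (1 - p)) ^ 2)) ∧
    (p + (1 - p) * p * ((1 - Real.sqrt p) / (1 - p))) /
        (1 - (1 - p) ^ 2 * ((1 - Real.sqrt p) / (1 - p)) ^ 2) = Real.sqrt p := by
  obtain ⟨s, hs0, rfl⟩ : ∃ s, 0 < s ∧ p = s ^ 2 :=
    ⟨√p, Real.sqrt_pos.2 hp0, (Real.sq_sqrt hp0.le).symm⟩
  have hs1 : s < 1 := by nlinarith
  have hq : 0 < 1 - s ^ 2 := by linarith
  rw [Real.sqrt_sq hs0.le, one_sub_div_one_sub_sq hs1.ne]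
  have hf : ∀ x, 0 ≤ x → (s ^ 2 + (1 - s ^ 2) * s ^ 2 * x) / (1 - (1 - s ^ 2) ^ 2 * x ^ 2) =
      s ^ 2 / (1 - (1 - s ^ 2) * x) := fun x hx =>
    add_mul_mul_div_one_sub_sq_mul_sq (by positivity)
  have hqx₀ : (1 - s ^ 2) * (1 / (1 + s)) = 1 - s := by field_simp; ring
  have hx₀ : 0 ≤ 1 / (1 + s) := by positivity
  have hx₀1 : 1 / (1 + s) ≤ 1 := by rw [div_le_one (by positivity)]; linarith
  have hval : s ^ 2 / (1 - (1 - s)) = s := by rw [sub_sub_cancel, sq, mul_self_div_self]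
  rw [hf _ hx₀, hqx₀, hval]
  refine ⟨⟨⟨hx₀, hx₀1⟩,
    (one_sub_sq_mul_sq_sub_two_mul_add_one_nonneg_iff hs0 hs1.le hx₀1).2 le_rfl⟩, ?_, rfl⟩
  rintro x ⟨⟨hx0, hx1⟩, hcon⟩
  have hxx₀ := (one_sub_sq_mul_sq_sub_two_mul_add_one_nonneg_iff hs0 hs1.le hx1).1 hcon
  have hqx : (1 - s ^ 2) * x ≤ 1 - s := hqx₀ ▸ mul_le_mul_of_nonneg_left hxx₀ hq.le
  rw [hf x hx0]
  exact (div_le_div_of_nonneg_left (sq_nonneg s) (by linarith) (by linarith)).trans_eq hval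
end

section
/- Let (a_n)_{n∈ℕ} and (p_n)_{n∈ℕ} be sequences of real numbers satisfying a_n = p_n + (1/4)·a_{n+2} for all n ∈ ℕ and 0 ≤ a_n ≤ 4 for all n ∈ ℕ. Then a_n = 1 for all n ∈ ℕ if and only if p_n = 3/4 for all n ∈ ℕ. -/
/-!
With `p n = 3/4`, the deviation `b n = a n - 1` satisfies `b n = b (n + 2) / 4`, so iterating
`k` times gives `|b n| ≤ 3 / 4 ^ k` from the bound `|b| ≤ 3`; letting `k → ∞` forces `b = 0`.
-/

open Filter Topology

theorem eq_zero_of_norm_le_mul_norm_shift {E : Type*} [NormedAddCommGroup E] {b : ℕ → E}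
    {r M : ℝ} {m : ℕ} (hr₀ : 0 ≤ r) (hr₁ : r < 1) (hM : ∀ n, ‖b n‖ ≤ M)
    (hb : ∀ n, ‖b n‖ ≤ r * ‖b (n + m)‖) (n : ℕ) : b n = 0 := by
  have iterate : ∀ k n, ‖b n‖ ≤ r ^ k * M := by
    intro k
    induction k with
    | zero => simpa using hM
    | succ k ih =>
      intro n
      calc ‖b n‖ ≤ r * ‖b (n + m)‖ := hb n
        _ ≤ r * (r ^ k * M) := by gcongr; exact ih _
        _ = r ^ (k + 1) * M := by ring
  have hlim : Tendsto (fun k => r ^ k * M) atTop (𝓝 0) := by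
    simpa using (tendsto_pow_atTop_nhds_zero_of_lt_one hr₀ hr₁).mul_const M
  exact norm_le_zero_iff.mp (ge_of_tendsto' hlim fun k => iterate k n)

/-- If real sequences satisfy `a n = p n + (1/4) * a (n+2)` and `0 ≤ a n ≤ 4` for all `n`, then
`a n = 1` for all `n` iff `p n = 3/4` for all `n`. -/
theorem seq_eq_one_iff (a p : ℕ → ℝ) (hrec : ∀ n, a n = p n + (1 / 4) * a (n + 2))
    (hlb : ∀ n, 0 ≤ a n) (hub : ∀ n, a n ≤ 4) :
    (∀ n, a n = 1) ↔ ∀ n, p n = 3 / 4 := by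
  constructor
  · intro ha n
    linarith [hrec n, ha n, ha (n + 2)]
  · intro hp n
    have hbound : ∀ n, |a n - 1| ≤ 3 := fun n =>
      abs_le.mpr ⟨by linarith [hlb n], by linarith [hub n]⟩
    have hcontract : ∀ n, |a n - 1| ≤ 1 / 4 * |a (n + 2) - 1| := by
      intro n
      have hdev : a n - 1 = 1 / 4 * (a (n + 2) - 1) := by linarith [hrec n, hp n]
      rw [hdev, abs_mul, abs_of_pos (by norm_num : (0 : ℝ) < 1 / 4)]
    have := eq_zero_of_norm_le_mul_norm_shift (b := fun n => a n - 1) (by norm_num)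
      (by norm_num) hbound hcontract n
    exact sub_eq_zero.mp this
end
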